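/- Let σ be a strongly convex rational polyhedral cone in N_R, τ = σ ∩ ker m_{σ,τ} a face, and J^σ ⊆ C[S_σ] a monomial ideal generated by a finite set B_σ ⊂ S_σ; similarly J^τ generated by B_τ ⊂ S_τ. Then J^σ localized at x^{m_{σ,τ}} equals J^τ if and only if: (i) for every b ∈ B_σ there exists a ∈ B_τ with a ≤_τ b, and (ii) for every a ∈ B_τ there exists b ∈ B_σ with b ≤_τ a; where m' ≤_τ m means m - m' ∈ S_τ. -/

import Mathlib

noncomputable section

/-- The dual semigroup `S_σ = σ̌ ∩ M` of a cone `σ ⊆ ℝⁿ`, inside the lattice `M = ℤⁿ`. -/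
def dualSemi {n : ℕ} (σ : Set (Fin n → ℝ)) : AddSubmonoid (Fin n → ℤ) where
  carrier := {m | ∀ u ∈ σ, 0 ≤ ∑ i, (m i : ℝ) * u i}
  zero_mem' := by intro u _; simp
  add_mem' := by
    intro a b ha hb u hu
    have h := add_nonneg (ha u hu) (hb u hu)
    rw [← Finset.sum_add_distrib] at h
    have e : ∑ i, (((a + b) i : ℤ) : ℝ) * u i
        = ∑ i, ((a i : ℝ) * u i + (b i : ℝ) * u i) := by
      refine Finset.sum_congr rfl fun i _ => ?_
      simp [Pi.add_apply]
      ring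
    rw [e]
    exact h

/-- `σ` is a rational polyhedral cone: generated by finitely many lattice points. -/
def IsRatPolyCone {n : ℕ} (σ : Set (Fin n → ℝ)) : Prop :=
  ∃ (k : ℕ) (v : Fin k → (Fin n → ℤ)),
    σ = {u | ∃ lam : Fin k → ℝ, (∀ i, 0 ≤ lam i) ∧
      u = ∑ i, fun j => lam i * (v i j : ℝ)}

/-- `σ` is strongly convex: it contains no line through the origin. -/
def StronglyConvex {n : ℕ} (σ : Set (Fin n → ℝ)) : Prop :=
  ∀ u ∈ σ, -u ∈ σ → u = 0

/-- The face of `σ` cut out by `m₀ ∈ S_σ`. -/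
def faceCut {n : ℕ} (σ : Set (Fin n → ℝ)) (m0 : Fin n → ℤ) : Set (Fin n → ℝ) :=
  {u ∈ σ | ∑ i, (m0 i : ℝ) * u i = 0}

/-- `τ` is a face of `σ`. -/
def IsFaceOf {n : ℕ} (τ σ : Set (Fin n → ℝ)) : Prop :=
  ∃ m0 ∈ dualSemi σ, τ = faceCut σ m0

/-- The pairing of `m ∈ M = ℤⁿ` with `c ∈ N_ℂ = ℂⁿ`. -/
def pairC {n : ℕ} (m : Fin n → ℤ) (c : Fin n → ℂ) : ℂ := ∑ i, (m i : ℂ) * c i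

/-! A monomial `x^m` lies in the ideal generated by the monomials `x^a`, `a ∈ B`, exactly when
`m` is divisible in the semigroup by some `a ∈ B`, since membership in a monomial ideal is read
off the support. So two monomial ideals coincide iff every generator of each is divisible by a
generator of the other. Here `B_σ ⊆ S_σ ⊆ S_τ`, and in `S_τ ⊆ M` divisibility `a ≤_τ b` means
`b - a ∈ S_τ`. -/

namespace AddMonoidAlgebra

variable {k A : Type*} [Semiring k]

theorem setOf_exists_single_one_eq_image_of' [AddZeroClass A] (P : A → Prop) :
    {f : AddMonoidAlgebra k A | ∃ m, P m ∧ f = single m 1} = of' k A '' {m | P m} := by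
  ext f
  simp only [Set.mem_ofPred_eq, Set.mem_image, eq_comm (a := f)]
  rfl

theorem single_one_mem_ideal_span_of'_image_iff [Nontrivial k] [AddMonoid A] {s : Set A} {m : A} :
    single m (1 : k) ∈ Ideal.span (of' k A '' s) ↔ ∃ m' ∈ s, ∃ d, m = d + m' := by
  classical
  rw [mem_ideal_span_of'_image]
  simp [coeff_single]

theorem ideal_span_of'_image_eq_iff [Nontrivial k] [AddMonoid A] {s t : Set A} :
    Ideal.span (of' k A '' s) = Ideal.span (of' k A '' t) ↔
      (∀ m ∈ s, ∃ m' ∈ t, ∃ d, m = d + m') ∧ (∀ m ∈ t, ∃ m' ∈ s, ∃ d, m = d + m') := by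
  simp only [le_antisymm_iff, Ideal.span_le, Set.image_subset_iff]
  exact Iff.and (forall₂_congr fun m _ => single_one_mem_ideal_span_of'_image_iff)
    (forall₂_congr fun m _ => single_one_mem_ideal_span_of'_image_iff)

end AddMonoidAlgebra

theorem AddSubmonoid.forall_exists_add_iff_forall_exists_sub_mem {G : Type*} [AddCommGroup G]
    (S : AddSubmonoid G) {s t : Set G} (hs : s ⊆ S) (ht : t ⊆ S) :
    (∀ m ∈ (Subtype.val : S → G) ⁻¹' s, ∃ m' ∈ (Subtype.val : S → G) ⁻¹' t, ∃ d, m = d + m') ↔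
      ∀ b ∈ s, ∃ a ∈ t, b - a ∈ S := by
  constructor
  · rintro h b hb
    obtain ⟨a, ha, d, hd⟩ := h ⟨b, hs hb⟩ hb
    refine ⟨a, ha, ?_⟩
    have hb' : b = d + a := congrArg Subtype.val hd
    rw [hb', add_sub_cancel_right]
    exact d.2
  · rintro h ⟨b, hbS⟩ hb
    obtain ⟨a, ha, hd⟩ := h b hb
    exact ⟨⟨a, ht ha⟩, ha, ⟨b - a, hd⟩, Subtype.ext (sub_add_cancel b a).symm⟩

theorem dualSemi_anti {n : ℕ} {σ τ : Set (Fin n → ℝ)} (h : τ ⊆ σ) : dualSemi σ ≤ dualSemi τ :=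
  fun _ hm u hu => hm u (h hu)

theorem stmt8_general (n : ℕ) (σ : Set (Fin n → ℝ))
    (m0 : Fin n → ℤ)
    (Bσ Bτ : Finset (Fin n → ℤ))
    (hBσ : ∀ b ∈ Bσ, b ∈ dualSemi σ)
    (hBτ : ∀ a ∈ Bτ, a ∈ dualSemi (faceCut σ m0)) :
    (Ideal.span {f : AddMonoidAlgebra ℂ (dualSemi (faceCut σ m0)) |
        ∃ m : dualSemi (faceCut σ m0), (↑m : Fin n → ℤ) ∈ Bσ ∧
          f = AddMonoidAlgebra.single m 1}
      = Ideal.span {f : AddMonoidAlgebra ℂ (dualSemi (faceCut σ m0)) |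
        ∃ m : dualSemi (faceCut σ m0), (↑m : Fin n → ℤ) ∈ Bτ ∧
          f = AddMonoidAlgebra.single m 1})
    ↔ ((∀ b ∈ Bσ, ∃ a ∈ Bτ, b - a ∈ dualSemi (faceCut σ m0)) ∧
       (∀ a ∈ Bτ, ∃ b ∈ Bσ, a - b ∈ dualSemi (faceCut σ m0))) := by
  have hBσ' : (Bσ : Set (Fin n → ℤ)) ⊆ dualSemi (faceCut σ m0) :=
    fun b hb => dualSemi_anti (Set.sep_subset _ _) (hBσ b hb)
  rw [AddMonoidAlgebra.setOf_exists_single_one_eq_image_of',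
    AddMonoidAlgebra.setOf_exists_single_one_eq_image_of',
    AddMonoidAlgebra.ideal_span_of'_image_eq_iff]
  exact Iff.and
    (AddSubmonoid.forall_exists_add_iff_forall_exists_sub_mem _ hBσ' hBτ)
    (AddSubmonoid.forall_exists_add_iff_forall_exists_sub_mem _ hBτ hBσ')

/-- With `τ = σ ∩ ker m₀` a face of `σ`, `J^σ` generated by a finite `B_σ ⊂ S_σ` and
`J^τ` generated by a finite `B_τ ⊂ S_τ`, the localization of `J^σ` at `x^{m₀}`
(i.e. its extension to `ℂ[S_τ]`) equals `J^τ` iff every `b ∈ B_σ` is divisible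
in `S_τ` by some `a ∈ B_τ` and every `a ∈ B_τ` is divisible in `S_τ` by some
`b ∈ B_σ`. -/
theorem stmt8 (n : ℕ) (σ : Set (Fin n → ℝ))
    (hpoly : IsRatPolyCone σ) (hsc : StronglyConvex σ)
    (m0 : Fin n → ℤ) (hm0 : m0 ∈ dualSemi σ)
    (Bσ Bτ : Finset (Fin n → ℤ))
    (hBσ : ∀ b ∈ Bσ, b ∈ dualSemi σ)
    (hBτ : ∀ a ∈ Bτ, a ∈ dualSemi (faceCut σ m0)) :
    (Ideal.span {f : AddMonoidAlgebra ℂ (dualSemi (faceCut σ m0)) |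
        ∃ m : dualSemi (faceCut σ m0), (↑m : Fin n → ℤ) ∈ Bσ ∧
          f = AddMonoidAlgebra.single m 1}
      = Ideal.span {f : AddMonoidAlgebra ℂ (dualSemi (faceCut σ m0)) |
        ∃ m : dualSemi (faceCut σ m0), (↑m : Fin n → ℤ) ∈ Bτ ∧
          f = AddMonoidAlgebra.single m 1})
    ↔ ((∀ b ∈ Bσ, ∃ a ∈ Bτ, b - a ∈ dualSemi (faceCut σ m0)) ∧
       (∀ a ∈ Bτ, ∃ b ∈ Bσ, a - b ∈ dualSemi (faceCut σ m0))) :=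
  stmt8_general n σ m0 Bσ Bτ hBσ hBτ
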